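/- Lemma 5.5: Let q be an integral nonsingular ternary quadratic form, p a prime not dividing det q, q' an integral ternary form similar to q (with matrix Q', upper-triangular part Q₀' and associated quaternary matrix N'), and A ∈ R(q, p²·q'). Then the rational matrix Ψ_A = Φ_A · diag(p, p⁻¹, p⁻¹, p⁻¹) has integer entries and satisfies ᵀΨ_A·N·Ψ_A = p²·N'; that is, Ψ_A ∈ R(n, p²·n'). -/
import Mathlib

open Matrix

/-- An integral quadratic form encoded by its matrix: symmetric with even diagonal. -/
def IsIntegralQF {m : ℕ} (Q : Matrix (Fin m) (Fin m) ℤ) : Prop :=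
  Q.IsSymm ∧ ∀ i, 2 ∣ Q i i

/-- `R(q,q')`: integral representations. -/
def Reps {m n : ℕ} (Q : Matrix (Fin m) (Fin m) ℤ) (Q' : Matrix (Fin n) (Fin n) ℤ) :
    Set (Matrix (Fin m) (Fin n) ℤ) :=
  {A | Aᵀ * Q * A = Q'}

/-- `q'` is similar to `q`. -/
def SimilarQF {m : ℕ} (Q Q' : Matrix (Fin m) (Fin m) ℤ) : Prop :=
  Q'.det = Q.det ∧ ∃ a : ℤ, IsCoprime a Q.det ∧ (Reps Q (a • Q')).Nonempty

/-- The upper triangular matrix `Q₀` of a ternary form `q`, so that `Q = Q₀ + ᵀQ₀`. -/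
def upperHalf (Q : Matrix (Fin 3) (Fin 3) ℤ) : Matrix (Fin 3) (Fin 3) ℤ :=
  Matrix.of fun i j => if i < j then Q i j else if i = j then Q i i / 2 else 0

/-- The vector `B = ᵀ(−b₂₃, b₁₃, −b₁₂)`. -/
def Bvec (Q : Matrix (Fin 3) (Fin 3) ℤ) : Fin 3 → ℤ := ![-(Q 1 2), Q 0 2, -(Q 0 1)]

/-- The matrix `N` (5.12) of the associated quaternary quadratic form `n`. -/
def Nmat (Q : Matrix (Fin 3) (Fin 3) ℤ) : Matrix (Fin 4) (Fin 4) ℤ :=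
  Matrix.reindex finSumFinEquiv finSumFinEquiv
    (Matrix.fromBlocks
      (Matrix.of fun (_ : Fin 1) (_ : Fin 1) => (2 : ℤ))
      (Matrix.of fun (_ : Fin 1) j => -(Bvec Q j))
      (Matrix.of fun i (_ : Fin 1) => -(Bvec Q i))
      ((upperHalf Q).adjugateᵀ + (upperHalf Q).adjugate))

/-- the `j`-th column of `A`. -/
def colv (A : Matrix (Fin 3) (Fin 3) ℤ) (j : Fin 3) : Fin 3 → ℤ := fun i => A i j

/-- the row `(ᵀA₃·Q₀·A₂, −ᵀA₃·Q₀·A₁, ᵀA₂·Q₀·A₁)`. -/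
def zrow (Q A : Matrix (Fin 3) (Fin 3) ℤ) : Fin 3 → ℤ :=
  ![colv A 2 ⬝ᵥ (upperHalf Q).mulVec (colv A 1),
    -(colv A 2 ⬝ᵥ (upperHalf Q).mulVec (colv A 0)),
    colv A 1 ⬝ᵥ (upperHalf Q).mulVec (colv A 0)]

/-- The matrix `Φ_A` (5.22). -/
def Phi (Q A : Matrix (Fin 3) (Fin 3) ℤ) : Matrix (Fin 4) (Fin 4) ℤ :=
  Matrix.reindex finSumFinEquiv finSumFinEquiv
    (Matrix.fromBlocks
      (Matrix.of fun (_ : Fin 1) (_ : Fin 1) => (1 : ℤ))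
      (Matrix.of fun (_ : Fin 1) j => zrow Q A j)
      (0 : Matrix (Fin 3) (Fin 1) ℤ)
      (A.adjugateᵀ))

/-! ### Auxiliary lemmas -/

lemma upperHalf_10 (Q : Matrix (Fin 3) (Fin 3) ℤ) : upperHalf Q 1 0 = 0 := rfl
lemma upperHalf_20 (Q : Matrix (Fin 3) (Fin 3) ℤ) : upperHalf Q 2 0 = 0 := rfl
lemma upperHalf_21 (Q : Matrix (Fin 3) (Fin 3) ℤ) : upperHalf Q 2 1 = 0 := rfl

lemma upperHalf_diag (Q : Matrix (Fin 3) (Fin 3) ℤ) (i : Fin 3) :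
    upperHalf Q i i = Q i i / 2 := by simp [upperHalf]

lemma upperHalf_decomp (Q : Matrix (Fin 3) (Fin 3) ℤ) (hsym : ∀ i j, Q j i = Q i j)
    (heven : ∀ i, 2 ∣ Q i i) :
    ∀ i j : Fin 3, Q i j = upperHalf Q i j + upperHalf Q j i := by
  intro i j
  rcases lt_trichotomy i j with h | h | h
  · have h1 : upperHalf Q i j = Q i j := by simp [upperHalf, h]
    have h2 : upperHalf Q j i = 0 := by simp [upperHalf, not_lt.mpr h.le, h.ne']
    rw [h1, h2, add_zero]
  · subst h
    obtain ⟨d, hd⟩ := heven i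
    rw [upperHalf_diag, hd, Int.mul_ediv_cancel_left _ (by norm_num : (2:ℤ) ≠ 0)]
    ring
  · have h1 : upperHalf Q i j = 0 := by simp [upperHalf, not_lt.mpr h.le, h.ne']
    have h2 : upperHalf Q j i = Q j i := by simp [upperHalf, h]
    rw [h1, h2, zero_add]
    exact (hsym i j).symm

lemma Nmat_eq (Q : Matrix (Fin 3) (Fin 3) ℤ) :
    Nmat Q = !![2, -(Bvec Q 0), -(Bvec Q 1), -(Bvec Q 2);
      -(Bvec Q 0), ((upperHalf Q).adjugateᵀ + (upperHalf Q).adjugate) 0 0,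
        ((upperHalf Q).adjugateᵀ + (upperHalf Q).adjugate) 0 1,
        ((upperHalf Q).adjugateᵀ + (upperHalf Q).adjugate) 0 2;
      -(Bvec Q 1), ((upperHalf Q).adjugateᵀ + (upperHalf Q).adjugate) 1 0,
        ((upperHalf Q).adjugateᵀ + (upperHalf Q).adjugate) 1 1,
        ((upperHalf Q).adjugateᵀ + (upperHalf Q).adjugate) 1 2;
      -(Bvec Q 2), ((upperHalf Q).adjugateᵀ + (upperHalf Q).adjugate) 2 0,
        ((upperHalf Q).adjugateᵀ + (upperHalf Q).adjugate) 2 1,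
        ((upperHalf Q).adjugateᵀ + (upperHalf Q).adjugate) 2 2] := by
  ext i j
  fin_cases i <;> fin_cases j <;>
    simp [Nmat, Matrix.reindex_apply, Matrix.submatrix_apply] <;> rfl

lemma Phi_eq (Q A : Matrix (Fin 3) (Fin 3) ℤ) :
    Phi Q A = !![1, zrow Q A 0, zrow Q A 1, zrow Q A 2;
      0, A.adjugate 0 0, A.adjugate 1 0, A.adjugate 2 0;
      0, A.adjugate 0 1, A.adjugate 1 1, A.adjugate 2 1;
      0, A.adjugate 0 2, A.adjugate 1 2, A.adjugate 2 2] := by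
  ext i j
  fin_cases i <;> fin_cases j <;>
    simp [Phi, Matrix.reindex_apply, Matrix.submatrix_apply] <;> rfl

set_option maxHeartbeats 4000000 in
lemma core_identity (Q A : Matrix (Fin 3) (Fin 3) ℤ) (hsym : ∀ i j, Q j i = Q i j)
    (heven : ∀ i, 2 ∣ Q i i) :
    (Phi Q A)ᵀ * Nmat Q * Phi Q A = Nmat (Aᵀ * Q * A) := by
  have hq := upperHalf_decomp Q hsym heven
  have hVd : ∀ i, upperHalf (Aᵀ * Q * A) i i =
      A 0 i * (upperHalf Q 0 0 * A 0 i + upperHalf Q 0 1 * A 1 i + upperHalf Q 0 2 * A 2 i) +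
      A 1 i * (upperHalf Q 1 1 * A 1 i + upperHalf Q 1 2 * A 2 i) +
      A 2 i * (upperHalf Q 2 2 * A 2 i) := by
    intro i
    rw [upperHalf_diag]
    have h2 : (Aᵀ * Q * A) i i = 2 *
        (A 0 i * (upperHalf Q 0 0 * A 0 i + upperHalf Q 0 1 * A 1 i + upperHalf Q 0 2 * A 2 i) +
        A 1 i * (upperHalf Q 1 1 * A 1 i + upperHalf Q 1 2 * A 2 i) +
        A 2 i * (upperHalf Q 2 2 * A 2 i)) := by
      simp only [Matrix.mul_apply, Matrix.transpose_apply, Fin.sum_univ_three]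
      simp only [hq]
      simp only [upperHalf_10, upperHalf_20, upperHalf_21]
      ring
    rw [h2, Int.mul_ediv_cancel_left _ (by norm_num : (2:ℤ) ≠ 0)]
  have hV01 : upperHalf (Aᵀ * Q * A) 0 1 = (Aᵀ * Q * A) 0 1 := rfl
  have hV02 : upperHalf (Aᵀ * Q * A) 0 2 = (Aᵀ * Q * A) 0 2 := rfl
  have hV12 : upperHalf (Aᵀ * Q * A) 1 2 = (Aᵀ * Q * A) 1 2 := rfl
  rw [Nmat_eq Q, Nmat_eq (Aᵀ * Q * A), Phi_eq]
  ext i j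
  fin_cases i <;> fin_cases j
  all_goals simp [Matrix.mul_apply, Fin.sum_univ_four, Fin.sum_univ_three, Bvec, zrow, colv,
      dotProduct, Matrix.mulVec, Matrix.adjugate_fin_three, hV01, hV02, hV12, hVd,
      upperHalf_10, upperHalf_20, upperHalf_21, Matrix.vecHead, Matrix.vecTail]
  all_goals (try simp only [hq])
  all_goals (try simp only [upperHalf_10, upperHalf_20, upperHalf_21])
  all_goals ring

lemma upperHalf_smul (c : ℤ) (Q : Matrix (Fin 3) (Fin 3) ℤ) (heven : ∀ i, 2 ∣ Q i i) :
    upperHalf (c • Q) = c • upperHalf Q := by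
  ext i j
  rcases lt_trichotomy i j with h | h | h
  · simp [upperHalf, h]
  · subst h
    obtain ⟨d, hd⟩ := heven i
    rw [Matrix.smul_apply, upperHalf_diag, upperHalf_diag, Matrix.smul_apply, hd,
      smul_eq_mul, smul_eq_mul, Int.mul_ediv_cancel_left _ (by norm_num : (2:ℤ) ≠ 0),
      show c * (2 * d) = 2 * (c * d) by ring,
      Int.mul_ediv_cancel_left _ (by norm_num : (2:ℤ) ≠ 0)]
  · simp [upperHalf, not_lt.mpr h.le, h.ne']

set_option maxHeartbeats 1000000 in
lemma conj_identity (c : ℤ) (Q' : Matrix (Fin 3) (Fin 3) ℤ) (heven : ∀ i, 2 ∣ Q' i i) :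
    Matrix.diagonal ![c, 1, 1, 1] * Nmat (c • Q') * Matrix.diagonal ![c, 1, 1, 1] =
      (c * c) • Nmat Q' := by
  have hadjE : ∀ i j, (upperHalf (c • Q')).adjugate i j =
      c ^ 2 * (upperHalf Q').adjugate i j := by
    intro i j
    rw [upperHalf_smul c Q' heven, Matrix.adjugate_smul]
    norm_num
  rw [Nmat_eq (c • Q'), Nmat_eq Q']
  ext i j
  fin_cases i <;> fin_cases j <;>
  · simp only [Matrix.smul_apply, Bvec, hadjE, Matrix.transpose_apply, Matrix.add_apply,
      smul_eq_mul]
    simp [Matrix.diagonal_mul, Matrix.mul_diagonal, Bvec, Matrix.vecHead, Matrix.vecTail,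
      Matrix.smul_apply, Matrix.transpose_apply, Matrix.add_apply, hadjE, smul_eq_mul]
    try ring

lemma psi_map (p : ℕ) (hp0 : (p:ℤ) ≠ 0) (M N : Matrix (Fin 4) (Fin 4) ℤ)
    (h : (p:ℤ) • N = M * Matrix.diagonal ![(p:ℤ)^2, 1, 1, 1]) :
    N.map (Int.cast : ℤ → ℚ) =
      M.map (Int.cast : ℤ → ℚ) * Matrix.diagonal ![(p:ℚ), (p:ℚ)⁻¹, (p:ℚ)⁻¹, (p:ℚ)⁻¹] := by
  have hp0' : (p:ℚ) ≠ 0 := by exact_mod_cast hp0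
  have hv : ∀ j : Fin 4, ((![(p:ℤ)^2, 1, 1, 1] j : ℤ) : ℚ) = ![(p:ℚ)^2, 1, 1, 1] j := by
    intro j; fin_cases j <;> simp
  have hcast : (p:ℚ) • N.map (Int.cast : ℤ → ℚ) =
      M.map (Int.cast : ℤ → ℚ) * Matrix.diagonal ![(p:ℚ)^2, 1, 1, 1] := by
    ext i j
    simp only [Matrix.smul_apply, Matrix.map_apply, Matrix.mul_diagonal, smul_eq_mul]
    have he := congrFun (congrFun h i) j
    simp only [Matrix.smul_apply, Matrix.mul_diagonal, smul_eq_mul] at he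
    have hc := congrArg (Int.cast : ℤ → ℚ) he
    push_cast at hc
    rw [hv j] at hc
    convert hc using 2 <;> push_cast <;> ring
  have hvec : (fun i => ![(p:ℚ), (p:ℚ)⁻¹, (p:ℚ)⁻¹, (p:ℚ)⁻¹] i * (p:ℚ)) =
      ![(p:ℚ)^2, 1, 1, 1] := by
    funext k
    fin_cases k <;> simp [pow_two] <;> field_simp
  have hD : (Matrix.diagonal ![(p:ℚ)^2, 1, 1, 1] : Matrix (Fin 4) (Fin 4) ℚ) =
      Matrix.diagonal ![(p:ℚ), (p:ℚ)⁻¹, (p:ℚ)⁻¹, (p:ℚ)⁻¹] *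
        Matrix.diagonal (fun _ => (p:ℚ)) := by
    rw [Matrix.diagonal_mul_diagonal, hvec]
  rw [hD, ← Matrix.mul_assoc] at hcast
  have hsm : (M.map (Int.cast : ℤ → ℚ) * Matrix.diagonal ![(p:ℚ), (p:ℚ)⁻¹, (p:ℚ)⁻¹, (p:ℚ)⁻¹]) *
      Matrix.diagonal (fun _ => (p:ℚ)) =
      (p:ℚ) • (M.map (Int.cast : ℤ → ℚ) * Matrix.diagonal ![(p:ℚ), (p:ℚ)⁻¹, (p:ℚ)⁻¹, (p:ℚ)⁻¹]) := by
    ext i j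
    simp [Matrix.mul_diagonal, mul_comm]
  rw [hsm] at hcast
  ext i j
  have h3 := congrFun (congrFun hcast i) j
  simp only [Matrix.smul_apply, smul_eq_mul] at h3
  exact mul_left_cancel₀ hp0' h3

set_option maxHeartbeats 1000000 in
/-- Lemma 5.5: for `A ∈ R(q, p²·q')` with `p ∤ det q`, the rational matrix
`Ψ_A = Φ_A·diag(p,p⁻¹,p⁻¹,p⁻¹)` has integer entries and `Ψ_A ∈ R(n, p²·n')`. -/
theorem lemma_5_5 (Q Q' : Matrix (Fin 3) (Fin 3) ℤ)
    (hQI : IsIntegralQF Q) (hQ'I : IsIntegralQF Q') (hQns : Q.det ≠ 0)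
    (p : ℕ) (hp : p.Prime) (hpd : ¬ (p : ℤ) ∣ Q.det)
    (hsim : SimilarQF Q Q')
    (A : Matrix (Fin 3) (Fin 3) ℤ) (hA : A ∈ Reps Q (((p : ℤ)^2) • Q')) :
    ∃ Ψ : Matrix (Fin 4) (Fin 4) ℤ,
      Ψ.map (Int.cast : ℤ → ℚ) =
        (Phi Q A).map (Int.cast : ℤ → ℚ) *
          Matrix.diagonal ![(p : ℚ), (p : ℚ)⁻¹, (p : ℚ)⁻¹, (p : ℚ)⁻¹] ∧
      Ψᵀ * Nmat Q * Ψ = ((p : ℤ)^2) • Nmat Q' := by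
  have hA' : Aᵀ * Q * A = ((p : ℤ)^2) • Q' := hA
  have hp0 : (p:ℤ) ≠ 0 := by exact_mod_cast hp.ne_zero
  have hpZ : Prime (p:ℤ) := Nat.prime_iff_prime_int.mp hp
  obtain ⟨hQsym, hQeven⟩ := hQI
  obtain ⟨hQ'sym, hQ'even⟩ := hQ'I
  have hsymQ : ∀ i j, Q j i = Q i j := fun i j => hQsym.apply i j
  -- determinant of A
  have hdetsq : A.det ^ 2 * Q.det = ((p:ℤ)^3)^2 * Q.det := by
    have h := congrArg Matrix.det hA'
    rw [Matrix.det_mul, Matrix.det_mul, Matrix.det_transpose, Matrix.det_smul, hsim.1] at h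
    simp only [Fintype.card_fin] at h
    linear_combination h
  have hdetA : A.det = (p:ℤ)^3 ∨ A.det = -((p:ℤ)^3) := by
    have h1 : A.det ^ 2 = ((p:ℤ)^3)^2 := mul_right_cancel₀ hQns hdetsq
    have h0 : (A.det - (p:ℤ)^3) * (A.det + (p:ℤ)^3) = 0 := by linear_combination h1
    rcases mul_eq_zero.mp h0 with h | h
    · exact Or.inl (by linarith)
    · exact Or.inr (by linarith)
  -- divisibility of the adjugate
  have e1 : A.det • (Q * A) = ((p:ℤ)^2) • (Aᵀ.adjugate * Q') := by
    calc A.det • (Q * A)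
        = ((A.det • (1 : Matrix (Fin 3) (Fin 3) ℤ)) * Q) * A := by
          rw [Matrix.smul_mul, Matrix.smul_mul, Matrix.one_mul]
      _ = ((Aᵀ.adjugate * Aᵀ) * Q) * A := by
          rw [Matrix.adjugate_mul, Matrix.det_transpose]
      _ = Aᵀ.adjugate * (Aᵀ * Q * A) := by simp only [Matrix.mul_assoc]
      _ = Aᵀ.adjugate * (((p:ℤ)^2) • Q') := by rw [hA']
      _ = ((p:ℤ)^2) • (Aᵀ.adjugate * Q') := by rw [Matrix.mul_smul]
  have e2 : A.det • (Aᵀ * Q) = ((p:ℤ)^2) • (Q' * A.adjugate) := by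
    have h := congrArg Matrix.transpose e1
    rw [Matrix.transpose_smul, Matrix.transpose_smul, Matrix.transpose_mul,
      Matrix.transpose_mul, hQsym, hQ'sym, ← Matrix.adjugate_transpose,
      Matrix.transpose_transpose] at h
    exact h
  have e3 : A.det • (Q'.adjugate * Aᵀ * Q) = ((p:ℤ)^2 * Q.det) • A.adjugate := by
    have h := congrArg (fun M => Q'.adjugate * M) e2
    simp only [Matrix.mul_smul, ← Matrix.mul_assoc, Matrix.adjugate_mul, Matrix.smul_mul,
      Matrix.one_mul, smul_smul, hsim.1] at h
    exact h
  have hadj : ∀ i j, (p:ℤ) ∣ A.adjugate i j := by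
    intro i j
    have h := congrFun (congrFun e3 i) j
    simp only [Matrix.smul_apply, smul_eq_mul] at h
    have hdd : (p:ℤ) ∣ Q.det * A.adjugate i j := by
      rcases hdetA with hd | hd
      · rw [hd] at h
        have hc : ((p:ℤ)^2) * ((p:ℤ) * ((Q'.adjugate * Aᵀ * Q) i j)) =
            ((p:ℤ)^2) * (Q.det * A.adjugate i j) := by linear_combination h
        exact ⟨_, (mul_left_cancel₀ (pow_ne_zero 2 hp0) hc).symm⟩
      · rw [hd] at h
        have hc : ((p:ℤ)^2) * ((p:ℤ) * (-((Q'.adjugate * Aᵀ * Q) i j))) =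
            ((p:ℤ)^2) * (Q.det * A.adjugate i j) := by linear_combination h
        exact ⟨_, (mul_left_cancel₀ (pow_ne_zero 2 hp0) hc).symm⟩
    rcases hpZ.dvd_mul.mp hdd with h' | h'
    · exact absurd h' hpd
    · exact h'
  -- det Q is even
  have hdet2 : (2:ℤ) ∣ Q.det := by
    obtain ⟨d0, h0⟩ := hQeven 0
    obtain ⟨d1, h1⟩ := hQeven 1
    obtain ⟨d2, h2⟩ := hQeven 2
    refine ⟨4*d0*d1*d2 - d0*(Q 1 2)^2 - (Q 0 1)^2*d2 + (Q 0 1)*(Q 0 2)*(Q 1 2)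
      - (Q 0 2)^2*d1, ?_⟩
    rw [Matrix.det_fin_three, hsymQ 0 1, hsymQ 0 2, hsymQ 1 2, h0, h1, h2]
    ring
  have hpodd : ¬ (p:ℤ) ∣ 2 := fun h => hpd (h.trans hdet2)
  have hAe : ∀ i j, (Aᵀ * Q * A) i j = (p:ℤ)^2 * Q' i j := by
    intro i j
    rw [hA']
    simp [Matrix.smul_apply]
  -- divisibility of the z-row
  have hq := upperHalf_decomp Q hsymQ hQeven
  have hzid0 : 2 * zrow Q A 0 = (Aᵀ*Q*A) 2 1 +
      (A.adjugate 0 0 * Bvec Q 0 + A.adjugate 0 1 * Bvec Q 1 + A.adjugate 0 2 * Bvec Q 2) := by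
    simp [zrow, colv, dotProduct, Matrix.mulVec, Fin.sum_univ_three, Matrix.mul_apply,
      Bvec, Matrix.adjugate_fin_three, Matrix.vecHead, Matrix.vecTail]
    simp only [hq]
    simp only [upperHalf_10, upperHalf_20, upperHalf_21]
    ring
  have hzid1 : 2 * zrow Q A 1 = -((Aᵀ*Q*A) 2 0) +
      (A.adjugate 1 0 * Bvec Q 0 + A.adjugate 1 1 * Bvec Q 1 + A.adjugate 1 2 * Bvec Q 2) := by
    simp [zrow, colv, dotProduct, Matrix.mulVec, Fin.sum_univ_three, Matrix.mul_apply,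
      Bvec, Matrix.adjugate_fin_three, Matrix.vecHead, Matrix.vecTail]
    simp only [hq]
    simp only [upperHalf_10, upperHalf_20, upperHalf_21]
    ring
  have hzid2 : 2 * zrow Q A 2 = (Aᵀ*Q*A) 1 0 +
      (A.adjugate 2 0 * Bvec Q 0 + A.adjugate 2 1 * Bvec Q 1 + A.adjugate 2 2 * Bvec Q 2) := by
    simp [zrow, colv, dotProduct, Matrix.mulVec, Fin.sum_univ_three, Matrix.mul_apply,
      Bvec, Matrix.adjugate_fin_three, Matrix.vecHead, Matrix.vecTail]
    simp only [hq]
    simp only [upperHalf_10, upperHalf_20, upperHalf_21]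
    ring
  have hz : ∀ j, (p:ℤ) ∣ zrow Q A j := by
    have key : ∀ j, (p:ℤ) ∣ 2 * zrow Q A j → (p:ℤ) ∣ zrow Q A j := by
      intro j h2
      rcases hpZ.dvd_mul.mp h2 with h | h
      · exact absurd h hpodd
      · exact h
    intro j
    fin_cases j
    · refine key 0 ?_
      rw [hzid0]
      refine dvd_add ⟨(p:ℤ) * Q' 2 1, by rw [hAe 2 1]; ring⟩ ?_
      exact dvd_add (dvd_add ((hadj 0 0).mul_right _) ((hadj 0 1).mul_right _))
        ((hadj 0 2).mul_right _)
    · refine key 1 ?_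
      rw [hzid1]
      refine dvd_add ⟨-((p:ℤ) * Q' 2 0), by rw [hAe 2 0]; ring⟩ ?_
      exact dvd_add (dvd_add ((hadj 1 0).mul_right _) ((hadj 1 1).mul_right _))
        ((hadj 1 2).mul_right _)
    · refine key 2 ?_
      rw [hzid2]
      refine dvd_add ⟨(p:ℤ) * Q' 1 0, by rw [hAe 1 0]; ring⟩ ?_
      exact dvd_add (dvd_add ((hadj 2 0).mul_right _) ((hadj 2 1).mul_right _))
        ((hadj 2 2).mul_right _)
  -- construct Ψ
  have hdvd : ∀ i j, (p:ℤ) ∣ (Phi Q A * Matrix.diagonal ![(p:ℤ)^2, 1, 1, 1]) i j := by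
    intro i j
    rw [Matrix.mul_diagonal, Phi_eq]
    fin_cases i <;> fin_cases j
    all_goals simp [Matrix.vecHead, Matrix.vecTail]
    all_goals first
      | exact dvd_pow_self _ (by norm_num)
      | exact hz _
      | exact hadj _ _
  refine ⟨Matrix.of fun i j => (Phi Q A * Matrix.diagonal ![(p:ℤ)^2, 1, 1, 1]) i j / p, ?_, ?_⟩
  all_goals
    have hPsi : (p:ℤ) • (Matrix.of fun i j =>
        (Phi Q A * Matrix.diagonal ![(p:ℤ)^2, 1, 1, 1]) i j / p) =
        Phi Q A * Matrix.diagonal ![(p:ℤ)^2, 1, 1, 1] := by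
      ext i j
      simp only [Matrix.smul_apply, Matrix.of_apply, smul_eq_mul]
      exact Int.mul_ediv_cancel' (hdvd i j)
  · exact psi_map p hp0 _ _ hPsi
  · -- the representation condition
    have hmain : ((p:ℤ)^2) • ((Matrix.of fun i j =>
        (Phi Q A * Matrix.diagonal ![(p:ℤ)^2, 1, 1, 1]) i j / p)ᵀ * Nmat Q *
        (Matrix.of fun i j => (Phi Q A * Matrix.diagonal ![(p:ℤ)^2, 1, 1, 1]) i j / p)) =
        ((p:ℤ)^2) • (((p:ℤ)^2) • Nmat Q') := by
      have h1 : (((p:ℤ) • (Matrix.of fun i j =>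
          (Phi Q A * Matrix.diagonal ![(p:ℤ)^2, 1, 1, 1]) i j / p))ᵀ) * Nmat Q *
          ((p:ℤ) • (Matrix.of fun i j =>
          (Phi Q A * Matrix.diagonal ![(p:ℤ)^2, 1, 1, 1]) i j / p)) =
          ((p:ℤ)^2) • ((Matrix.of fun i j =>
          (Phi Q A * Matrix.diagonal ![(p:ℤ)^2, 1, 1, 1]) i j / p)ᵀ * Nmat Q *
          (Matrix.of fun i j => (Phi Q A * Matrix.diagonal ![(p:ℤ)^2, 1, 1, 1]) i j / p)) := by
        rw [Matrix.transpose_smul, Matrix.smul_mul, Matrix.smul_mul, Matrix.mul_smul,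
          smul_smul, ← pow_two]
      rw [← h1, hPsi, Matrix.transpose_mul, Matrix.diagonal_transpose]
      calc Matrix.diagonal ![(p:ℤ)^2, 1, 1, 1] * (Phi Q A)ᵀ * Nmat Q *
            (Phi Q A * Matrix.diagonal ![(p:ℤ)^2, 1, 1, 1])
          = Matrix.diagonal ![(p:ℤ)^2, 1, 1, 1] * ((Phi Q A)ᵀ * Nmat Q * Phi Q A) *
            Matrix.diagonal ![(p:ℤ)^2, 1, 1, 1] := by simp only [Matrix.mul_assoc]
        _ = Matrix.diagonal ![(p:ℤ)^2, 1, 1, 1] * Nmat (Aᵀ * Q * A) *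
            Matrix.diagonal ![(p:ℤ)^2, 1, 1, 1] := by rw [core_identity Q A hsymQ hQeven]
        _ = Matrix.diagonal ![(p:ℤ)^2, 1, 1, 1] * Nmat (((p:ℤ)^2) • Q') *
            Matrix.diagonal ![(p:ℤ)^2, 1, 1, 1] := by rw [hA']
        _ = (((p:ℤ)^2) * ((p:ℤ)^2)) • Nmat Q' := conj_identity _ Q' hQ'even
        _ = ((p:ℤ)^2) • (((p:ℤ)^2) • Nmat Q') := by rw [smul_smul]
    ext i j
    have h := congrFun (congrFun hmain i) j
    simp only [Matrix.smul_apply, smul_eq_mul] at h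
    exact mul_left_cancel₀ (pow_ne_zero 2 hp0) h
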